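/- arXiv:math/0107066 — 7 statements merged into one kernel-verified Lean document; each statement's English description precedes it below -/
import Mathlib

section
/- Let m and n be integers with 2 ≤ m ≤ n. Then there exists an m-by-n array in which each symbol appears at most ⌊(mn - 1)/(m - 1)⌋ + 1 times and which has no latin transversal. (Equivalently, L(m,n) ≤ (mn - 1)/(m - 1).) -/
/-!
Number the cells of the `m × n` array row by row with `0, …, mn - 1` and fill cell `k` with the
symbol `k % (m - 1)`. Only `m - 1` symbols occur, so by pigeonhole no `m` cells carry distinct
symbols; and `k ↦ k / (m - 1)` is injective on each residue class in `[0, mn)`, with values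
at most `(mn - 1) / (m - 1)`.
-/

open Finset Function

lemma card_filter_range_mod_eq_le (d N s : ℕ) :
    ((range N).filter (· % d = s)).card ≤ (N - 1) / d + 1 := by
  simpa using card_le_card_of_injOn (· / d) (t := range ((N - 1) / d + 1))
    (fun k hk => by
      have hkN : k < N := (mem_range.1 (mem_filter.1 hk).1)
      simpa [Nat.lt_succ_iff] using Nat.div_le_div_right (c := d) (Nat.le_sub_one_of_lt hkN))
    (fun k hk l hl (hkl : k / d = l / d) => by
      rw [← Nat.div_add_mod k d, ← Nat.div_add_mod l d, hkl, (mem_filter.1 hk).2,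
        (mem_filter.1 hl).2])

lemma not_injective_mod_of_lt_card {α : Type*} [Fintype α] (g : α → ℕ) {d : ℕ} (hd : 0 < d)
    (hdα : d < Fintype.card α) : ¬ Injective (fun a => g a % d) := fun hinj => by
  have := Fintype.card_le_of_injective (fun a => (⟨g a % d, Nat.mod_lt _ hd⟩ : Fin d))
    (fun a b hab => hinj (congrArg Fin.val hab))
  rw [Fintype.card_fin] at this
  omega

-- `finProdFinEquiv (i, j) = j + n * i`, the row-by-row number of the cell.
def modArray (m n d : ℕ) (i : Fin m) (j : Fin n) : ℕ :=
  (finProdFinEquiv (i, j) : ℕ) % d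

lemma card_filter_modArray_eq_le (m n d s : ℕ) :
    (univ.filter (fun p : Fin m × Fin n => modArray m n d p.1 p.2 = s)).card ≤
      (m * n - 1) / d + 1 :=
  (card_le_card_of_injOn (fun p => (finProdFinEquiv p : ℕ))
    (fun p hp => mem_filter.2 ⟨mem_range.2 (finProdFinEquiv p).isLt, (mem_filter.1 hp).2⟩)
    (fun _ _ _ _ hpq => finProdFinEquiv.injective (Fin.ext hpq))).trans
  (card_filter_range_mod_eq_le d (m * n) s)

theorem stmt_2_general (m n : ℕ) (hm : 2 ≤ m) :
    ∃ f : Fin m → Fin n → ℕ,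
      (∀ s : ℕ, (Finset.univ.filter (fun p : Fin m × Fin n => f p.1 p.2 = s)).card ≤
        (m * n - 1) / (m - 1) + 1) ∧
      ¬ ∃ σ : Fin m → Fin n, Function.Injective σ ∧
          Function.Injective (fun i => f i (σ i)) := by
  refine ⟨modArray m n (m - 1), card_filter_modArray_eq_le m n (m - 1), ?_⟩
  rintro ⟨σ, -, hinj⟩
  exact not_injective_mod_of_lt_card (fun i => finProdFinEquiv (i, σ i)) (by omega)
    (by rw [Fintype.card_fin]; omega) hinj

theorem stmt_2 (m n : ℕ) (hm : 2 ≤ m) (hmn : m ≤ n) :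
    ∃ f : Fin m → Fin n → ℕ,
      (∀ s : ℕ, (Finset.univ.filter (fun p : Fin m × Fin n => f p.1 p.2 = s)).card ≤
        (m * n - 1) / (m - 1) + 1) ∧
      ¬ ∃ σ : Fin m → Fin n, Function.Injective σ ∧
          Function.Injective (fun i => f i (σ i)) :=
  stmt_2_general m n hm
end

section
/- Let n ≥ 3 be an integer. Then every 2-by-n array in which each symbol appears at most 2n - 1 times has a latin transversal. (Equivalently, L(2,n) ≥ 2n - 1 for n ≥ 3.) -/
/-!
If a 2-by-n array has no latin transversal, then `f 0 j = f 1 k` whenever `j ≠ k`. With at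
least three columns these equalities chain together (through a third column avoiding `j` and
`k`) to force every entry of the array to be the same symbol, which then appears `2n` times.
-/

open Finset

theorem Fintype.exists_ne_ne_of_two_lt_card {α : Type*} [Fintype α] [DecidableEq α]
    (hα : 2 < Fintype.card α) (a b : α) : ∃ c, c ≠ a ∧ c ≠ b := by
  obtain ⟨c, -, hc⟩ := exists_mem_notMem_of_card_lt_card (s := {a, b}) (t := univ)
    (card_le_two.trans_lt (by rwa [card_univ]))
  simp only [mem_insert, mem_singleton, not_or] at hc
  exact ⟨c, hc⟩

theorem eq_of_forall_ne_imp_eq {α β : Type*} [Fintype α] [DecidableEq α]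
    (hα : 2 < Fintype.card α) {g h : α → β} (hgh : ∀ j k, j ≠ k → g j = h k) (j k : α) :
    g j = h k := by
  rcases ne_or_eq j k with hjk | rfl
  · exact hgh j k hjk
  · obtain ⟨l, hlj, -⟩ := Fintype.exists_ne_ne_of_two_lt_card hα j j
    obtain ⟨m, hmj, hml⟩ := Fintype.exists_ne_ne_of_two_lt_card hα j l
    calc g j = h l := hgh j l hlj.symm
      _ = g m := (hgh m l hml).symm
      _ = h j := hgh m j hmj

theorem exists_latin_transversal_of_ne {α β : Type*} (f : Fin 2 → α → β) {j k : α}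
    (hjk : j ≠ k) (hf : f 0 j ≠ f 1 k) :
    ∃ σ : Fin 2 → α, Function.Injective σ ∧ Function.Injective (fun i => f i (σ i)) := by
  refine ⟨![j, k], ?_, ?_⟩ <;>
  · intro i i' hii'
    fin_cases i <;> fin_cases i' <;> simp_all [eq_comm]

theorem stmt_4 (n : ℕ) (hn : 3 ≤ n) (f : Fin 2 → Fin n → ℕ)
    (h : ∀ s : ℕ, (Finset.univ.filter (fun p : Fin 2 × Fin n => f p.1 p.2 = s)).card ≤ 2 * n - 1) :
    ∃ σ : Fin 2 → Fin n, Function.Injective σ ∧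
      Function.Injective (fun i => f i (σ i)) := by
  by_contra hno
  have hoff : ∀ j k, j ≠ k → f 0 j = f 1 k := fun j k hjk =>
    not_not.mp fun hne => hno (exists_latin_transversal_of_ne f hjk hne)
  have hall := eq_of_forall_ne_imp_eq (by rw [Fintype.card_fin]; exact hn) hoff
  let c := f 0 ⟨0, by omega⟩
  have hconst : ∀ p : Fin 2 × Fin n, f p.1 p.2 = c := by
    rintro ⟨i, j⟩
    fin_cases i
    · exact (hall j ⟨0, by omega⟩).trans (hall _ _).symm
    · exact (hall _ j).symm
  have hcount := h c
  rw [filter_true_of_mem fun p _ => hconst p, card_univ, Fintype.card_prod, Fintype.card_fin,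
    Fintype.card_fin] at hcount
  omega
end

section
/- Every 3-by-4 array in which each symbol appears at most 3 times has a latin transversal. (Together with the upper bound from Parker's construction, this gives L(3,4) = 3.) -/
/-!
There are 24 injections `Fin 3 → Fin 4`, and one fails to be a latin transversal only if some
symbol occupies two of its cells. A symbol on a set `C` of `k ≤ 3` cells spoils no injection if
`k = 1`, at most 2 if `k = 2` (the remaining row has two free columns), and at most 4 if `k = 3`:
each of the three pairs of cells lies on at most 2 injections, and if every pair lies on some
injection, the three cells lie on a common one, which is then counted three times. So a symbol on `k`
cells spoils at most `4k/3` injections, all symbols together at most `4 · 12 / 3 = 16 < 24`.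
-/

open Finset Function

theorem Finset.card_union_union_le {α : Type*} [DecidableEq α] (s t u : Finset α) :
    #(s ∪ t ∪ u) ≤ #s + #t + #u :=
  (card_union_le _ _).trans (Nat.add_le_add_right (card_union_le _ _) _)

theorem Finset.card_union_union_add_two_le {α : Type*} [DecidableEq α] {s t u : Finset α} {x : α}
    (hs : x ∈ s) (ht : x ∈ t) (hu : x ∈ u) : #(s ∪ t ∪ u) + 2 ≤ #s + #t + #u := by
  have hunion : s ∪ t ∪ u = s ∪ t.erase x ∪ u.erase x := by
    ext y
    by_cases hy : y = x <;> simp_all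
  have hle := card_union_union_le s (t.erase x) (u.erase x)
  rw [← hunion, card_erase_of_mem ht, card_erase_of_mem hu] at hle
  have := card_pos.mpr ⟨x, ht⟩
  have := card_pos.mpr ⟨x, hu⟩
  omega

section Collisions

variable {ι κ : Type*} [Fintype ι] [DecidableEq ι] [Fintype κ] [DecidableEq κ]

def injectionsThrough (p q : ι × κ) : Finset (ι → κ) :=
  {σ | Injective σ ∧ σ p.1 = p.2 ∧ σ q.1 = q.2}

def collisions (C : Finset (ι × κ)) : Finset (ι → κ) :=
  {σ | Injective σ ∧ ∃ p ∈ C, ∃ q ∈ C, p ≠ q ∧ σ p.1 = p.2 ∧ σ q.1 = q.2}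

theorem injectionsThrough_comm (p q : ι × κ) : injectionsThrough p q = injectionsThrough q p := by
  ext σ
  simp only [injectionsThrough, mem_filter, mem_univ, true_and]
  tauto

theorem ne_of_mem_injectionsThrough {p q : ι × κ} {σ : ι → κ} (hpq : p ≠ q)
    (hσ : σ ∈ injectionsThrough p q) : p.1 ≠ q.1 ∧ p.2 ≠ q.2 := by
  simp only [injectionsThrough, mem_filter, mem_univ, true_and] at hσ
  obtain ⟨hinj, hp, hq⟩ := hσ
  refine ⟨fun h => hpq (Prod.ext h ?_), fun h => hpq (Prod.ext (hinj ?_) h)⟩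
  · rw [← hp, ← hq, h]
  · rw [hp, hq, h]

theorem mem_collisions {C : Finset (ι × κ)} {σ : ι → κ} :
    σ ∈ collisions C ↔ ∃ p ∈ C, ∃ q ∈ C, p ≠ q ∧ σ ∈ injectionsThrough p q := by
  simp only [collisions, injectionsThrough, mem_filter, mem_univ, true_and]
  constructor
  · rintro ⟨hinj, p, hp, q, hq, hpq, hσ⟩
    exact ⟨p, hp, q, hq, hpq, hinj, hσ⟩
  · rintro ⟨p, hp, q, hq, hpq, hinj, hσ⟩
    exact ⟨hinj, p, hp, q, hq, hpq, hσ⟩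

theorem collisions_eq_empty_of_card_le_one {C : Finset (ι × κ)} (hC : #C ≤ 1) :
    collisions C = ∅ := by
  refine eq_empty_of_forall_notMem fun σ hσ => ?_
  obtain ⟨p, hp, q, hq, hpq, -⟩ := mem_collisions.mp hσ
  exact hpq (card_le_one.mp hC p hp q hq)

theorem collisions_pair_subset (a b : ι × κ) : collisions {a, b} ⊆ injectionsThrough a b := by
  intro σ hσ
  obtain ⟨p, hp, q, hq, hpq, hσ⟩ := mem_collisions.mp hσ
  simp only [mem_insert, mem_singleton] at hp hq
  rcases hp with rfl | rfl <;> rcases hq with rfl | rfl <;>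
    first | exact absurd rfl hpq | assumption | rwa [injectionsThrough_comm]

theorem collisions_triple_subset (a b c : ι × κ) :
    collisions {a, b, c} ⊆
      injectionsThrough a b ∪ injectionsThrough a c ∪ injectionsThrough b c := by
  intro σ hσ
  obtain ⟨p, hp, q, hq, hpq, hσ⟩ := mem_collisions.mp hσ
  simp only [mem_insert, mem_singleton] at hp hq
  simp only [mem_union]
  rcases hp with rfl | rfl | rfl <;> rcases hq with rfl | rfl | rfl <;>
    first | exact absurd rfl hpq | simp_all [injectionsThrough_comm p]

theorem exists_latin_transversal_of_sum_card_collisions_lt {α : Type*} [DecidableEq α]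
    (f : ι → κ → α)
    (h : ∑ s ∈ univ.image (fun p : ι × κ => f p.1 p.2), #(collisions {p | f p.1 p.2 = s}) <
      #{σ : ι → κ | Injective σ}) :
    ∃ σ : ι → κ, Injective σ ∧ Injective fun i => f i (σ i) := by
  by_contra! hno
  refine h.not_ge ((card_le_card fun σ hσ => ?_).trans card_biUnion_le)
  obtain ⟨i, j, hfij, hij⟩ := not_injective_iff.mp (hno σ (mem_filter.mp hσ).2)
  refine mem_biUnion.mpr ⟨f i (σ i), mem_image_of_mem _ (mem_univ (i, σ i)), ?_⟩
  refine mem_filter.mpr ⟨mem_univ _, (mem_filter.mp hσ).2, (i, σ i), ?_, (j, σ j), ?_,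
    fun h => hij (congrArg Prod.fst h), rfl, rfl⟩
  · simp
  · simp [hfij]

end Collisions

theorem card_injectionsThrough_le_two {p q : Fin 3 × Fin 4} (hpq : p ≠ q) :
    #(injectionsThrough p q) ≤ 2 := by
  rcases (injectionsThrough p q).eq_empty_or_nonempty with h | ⟨σ, hσ⟩
  · simp [h]
  obtain ⟨hrow, hcol⟩ := ne_of_mem_injectionsThrough hpq hσ
  obtain ⟨r, hrp, hrq⟩ : ∃ r : Fin 3, r ≠ p.1 ∧ r ≠ q.1 := by
    have : ∀ i j : Fin 3, ∃ r, r ≠ i ∧ r ≠ j := by decide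
    exact this p.1 q.1
  -- an injection through `p` and `q` is determined by its value in the remaining row
  calc #(injectionsThrough p q) ≤ #((univ.erase p.2).erase q.2) := by
        refine card_le_card_of_injOn (fun σ => σ r) (fun σ hσ => ?_) (fun σ hσ τ hτ hστ => ?_)
        · simp only [injectionsThrough, coe_filter, mem_univ, true_and, Set.mem_ofPred_eq] at hσ
          obtain ⟨hinj, hp, hq⟩ := hσ
          simp only [coe_erase, coe_univ, Set.mem_sdiff, Set.mem_univ, Set.mem_singleton_iff,
            true_and]
          exact ⟨fun h => hrp (hinj (h.trans hp.symm)), fun h => hrq (hinj (h.trans hq.symm))⟩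
        · simp only [injectionsThrough, coe_filter, mem_univ, true_and, Set.mem_ofPred_eq] at hσ hτ
          funext i
          obtain rfl | rfl | rfl : i = p.1 ∨ i = q.1 ∨ i = r := by omega
          · rw [hσ.2.1, hτ.2.1]
          · rw [hσ.2.2, hτ.2.2]
          · exact hστ
    _ = 2 := by
        rw [card_erase_of_mem (mem_erase.mpr ⟨hcol.symm, mem_univ _⟩),
          card_erase_of_mem (mem_univ _)]
        simp

theorem exists_mem_injectionsThrough_three {a b c : Fin 3 × Fin 4}
    (hab : a.1 ≠ b.1 ∧ a.2 ≠ b.2) (hac : a.1 ≠ c.1 ∧ a.2 ≠ c.2) (hbc : b.1 ≠ c.1 ∧ b.2 ≠ c.2) :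
    ∃ σ, σ ∈ injectionsThrough a b ∧ σ ∈ injectionsThrough a c ∧ σ ∈ injectionsThrough b c := by
  have hcover : ∀ i, i = a.1 ∨ i = b.1 ∨ i = c.1 := by omega
  let σ : Fin 3 → Fin 4 := fun i => if i = a.1 then a.2 else if i = b.1 then b.2 else c.2
  have hσa : σ a.1 = a.2 := if_pos rfl
  have hσb : σ b.1 = b.2 := by simp [σ, hab.1.symm]
  have hσc : σ c.1 = c.2 := by simp [σ, hac.1.symm, hbc.1.symm]
  have hinj : Injective σ := by
    intro i j h
    rcases hcover i with rfl | rfl | rfl <;> rcases hcover j with rfl | rfl | rfl <;>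
      simp_all
  simp only [injectionsThrough, mem_filter, mem_univ, true_and]
  exact ⟨σ, ⟨hinj, hσa, hσb⟩, ⟨hinj, hσa, hσc⟩, ⟨hinj, hσb, hσc⟩⟩

theorem card_collisions_triple_le_four {a b c : Fin 3 × Fin 4} (hab : a ≠ b) (hac : a ≠ c)
    (hbc : b ≠ c) : #(collisions {a, b, c}) ≤ 4 := by
  have hAB := card_injectionsThrough_le_two hab
  have hAC := card_injectionsThrough_le_two hac
  have hBC := card_injectionsThrough_le_two hbc
  refine (card_le_card (collisions_triple_subset a b c)).trans ?_
  by_cases hall : (injectionsThrough a b).Nonempty ∧ (injectionsThrough a c).Nonempty ∧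
      (injectionsThrough b c).Nonempty
  · obtain ⟨⟨σ, hσab⟩, ⟨τ, hτac⟩, ⟨ρ, hρbc⟩⟩ := hall
    obtain ⟨σ₀, h₁, h₂, h₃⟩ := exists_mem_injectionsThrough_three
      (ne_of_mem_injectionsThrough hab hσab) (ne_of_mem_injectionsThrough hac hτac)
      (ne_of_mem_injectionsThrough hbc hρbc)
    have := card_union_union_add_two_le h₁ h₂ h₃
    omega
  · have := card_union_union_le (injectionsThrough a b) (injectionsThrough a c)
      (injectionsThrough b c)
    simp only [not_and_or, not_nonempty_iff_eq_empty] at hall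
    rcases hall with h | h | h <;> (have := card_eq_zero.mpr h; omega)

theorem three_mul_card_collisions_le {C : Finset (Fin 3 × Fin 4)} (hC : #C ≤ 3) :
    3 * #(collisions C) ≤ 4 * #C := by
  obtain h | h | h : #C ≤ 1 ∨ #C = 2 ∨ #C = 3 := by omega
  · simp [collisions_eq_empty_of_card_le_one h]
  · obtain ⟨a, b, hab, rfl⟩ := card_eq_two.mp h
    have := (card_le_card (collisions_pair_subset a b)).trans (card_injectionsThrough_le_two hab)
    omega
  · obtain ⟨a, b, c, hab, hac, hbc, rfl⟩ := card_eq_three.mp h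
    have := card_collisions_triple_le_four hab hac hbc
    omega

theorem stmt_6 (f : Fin 3 → Fin 4 → ℕ)
    (h : ∀ s : ℕ, (Finset.univ.filter (fun p : Fin 3 × Fin 4 => f p.1 p.2 = s)).card ≤ 3) :
    ∃ σ : Fin 3 → Fin 4, Function.Injective σ ∧
      Function.Injective (fun i => f i (σ i)) := by
  apply exists_latin_transversal_of_sum_card_collisions_lt
  have hinj : #{σ : Fin 3 → Fin 4 | Injective σ} = 24 := by decide
  have hcells := card_eq_sum_card_image (fun p : Fin 3 × Fin 4 => f p.1 p.2) univ
  rw [card_univ, Fintype.card_prod, Fintype.card_fin, Fintype.card_fin] at hcells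
  have hbound : 3 * ∑ s ∈ univ.image (fun p : Fin 3 × Fin 4 => f p.1 p.2),
      #(collisions {p | f p.1 p.2 = s}) ≤ 4 * (3 * 4) := by
    rw [hcells, mul_sum, mul_sum]
    exact sum_le_sum fun s _ => three_mul_card_collisions_le (h s)
  omega
end

section
/- Let n ≥ 4 be an integer and let f be a 3-by-n array that has no latin transversal. If some symbol appears in f at least once and at most 3 times, then some symbol appears in f at least 2n - 2 times (and hence at least 3n/2 times). -/
/-!
Let `s` occur at a cell `(p, a)` and call it a pivot. If `(q, x)` and `(r, y)` lie in the two
other rows, in distinct columns different from `a`, and neither holds `s`, then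
`f q x = f r y`: otherwise the three cells form a latin transversal. For `n ≥ 4` the relation
"different columns" links all such cells, so they carry a single symbol `v`. When every
occurrence of `s` lies in the row or column of the pivot this already gives `2n - 2` cells
holding `v`. Otherwise `s` occurs in a cell sharing neither row nor column with the pivot; as
`s` occurs at most three times, two occurrences can be chosen as pivots whose regions overlap,
hence give the same `v`, and together cover at least `2n - 2` cells.
-/

open Finset Function

def IsLatinTransversal {m n : ℕ} {α : Type*} (f : Fin m → Fin n → α) (σ : Fin m → Fin n) :
    Prop :=
  Injective σ ∧ Injective fun i => f i (σ i)

def cellsOf {m n : ℕ} {α : Type*} [DecidableEq α] (f : Fin m → Fin n → α) (s : α) :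
    Finset (Fin m × Fin n) :=
  {c | f c.1 c.2 = s}

@[simp]
theorem mem_cellsOf {m n : ℕ} {α : Type*} [DecidableEq α] {f : Fin m → Fin n → α} {s : α}
    {c : Fin m × Fin n} : c ∈ cellsOf f s ↔ f c.1 c.2 = s := by
  simp [cellsOf]

theorem card_cellsOf_eq_sum {m n : ℕ} {α : Type*} [DecidableEq α] (f : Fin m → Fin n → α)
    (v : α) : #(cellsOf f v) = ∑ i, #{x | f i x = v} := by
  simp only [cellsOf, card_filter, Fintype.sum_prod_type]

theorem Fin.sub_card_le_card_filter_eq {n : ℕ} {α : Type*} [DecidableEq α] {g : Fin n → α}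
    {v : α} {E : Finset (Fin n)} (h : ∀ x ∉ E, g x = v) : n - #E ≤ #{x | g x = v} :=
  calc n - #E = #Eᶜ := by rw [card_compl, Fintype.card_fin]
    _ ≤ _ := card_le_card fun x hx => mem_filter.mpr ⟨mem_univ x, h x (mem_compl.mp hx)⟩

theorem Fin.sub_one_le_card_filter_eq {n : ℕ} {α : Type*} [DecidableEq α] {g : Fin n → α}
    {v : α} {a : Fin n} (h : ∀ x, x ≠ a → g x = v) : n - 1 ≤ #{x | g x = v} := by
  simpa using Fin.sub_card_le_card_filter_eq (E := {a}) fun x hx => h x (by simpa using hx)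

theorem Fin.sub_two_le_card_filter_eq {n : ℕ} {α : Type*} [DecidableEq α] {g : Fin n → α}
    {v : α} {a b : Fin n} (h : ∀ x, x ≠ a → x ≠ b → g x = v) : n - 2 ≤ #{x | g x = v} :=
  le_trans (by have := card_le_two (a := a) (b := b); omega)
    (Fin.sub_card_le_card_filter_eq (E := {a, b}) fun x hx => by
      simp only [mem_insert, mem_singleton, not_or] at hx
      exact h x hx.1 hx.2)

theorem Fin.exists_ne_of_four_le {n : ℕ} (hn : 4 ≤ n) (a b c : Fin n) :
    ∃ d, d ≠ a ∧ d ≠ b ∧ d ≠ c := by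
  have hlt : #({a, b, c} : Finset (Fin n)) < #(univ : Finset (Fin n)) := by
    rw [card_univ, Fintype.card_fin]
    exact card_le_three.trans_lt (by omega)
  obtain ⟨d, -, hd⟩ := exists_mem_notMem_of_card_lt_card hlt
  simp only [mem_insert, mem_singleton, not_or] at hd
  exact ⟨d, hd⟩

theorem Finset.eq_or_eq_or_eq_of_card_le_three {β : Type*} [DecidableEq β] {T : Finset β}
    (hT : #T ≤ 3) {x y z w : β} (hx : x ∈ T) (hy : y ∈ T) (hz : z ∈ T) (hxy : x ≠ y)
    (hxz : x ≠ z) (hyz : y ≠ z) (hw : w ∈ T) : w = x ∨ w = y ∨ w = z := by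
  have hTeq : {x, y, z} = T := eq_of_subset_of_card_le (by simp [insert_subset_iff, *])
    (by rwa [card_eq_three.mpr ⟨x, y, z, hxy, hxz, hyz, rfl⟩])
  simpa [← hTeq] using hw

namespace Fin3

variable {p q r : Fin 3}

theorem univ_eq (hpq : p ≠ q) (hpr : p ≠ r) (hqr : q ≠ r) : (univ : Finset (Fin 3)) = {p, q, r} :=
  (eq_univ_of_card _ (card_eq_three.mpr ⟨p, q, r, hpq, hpr, hqr, rfl⟩)).symm

theorem eq_or_eq_or_eq (hpq : p ≠ q) (hpr : p ≠ r) (hqr : q ≠ r) (i : Fin 3) :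
    i = p ∨ i = q ∨ i = r := by
  simpa [univ_eq hpq hpr hqr] using mem_univ i

theorem sum_eq {M : Type*} [AddCommMonoid M] (hpq : p ≠ q) (hpr : p ≠ r) (hqr : q ≠ r)
    (g : Fin 3 → M) : ∑ i, g i = g p + g q + g r := by
  rw [univ_eq hpq hpr hqr, sum_insert (by simp [hpq, hpr]), sum_pair hqr, add_assoc]

theorem injective_of_ne {β : Type*} (hpq : p ≠ q) (hpr : p ≠ r) (hqr : q ≠ r) {u : Fin 3 → β}
    (h₁ : u p ≠ u q) (h₂ : u p ≠ u r) (h₃ : u q ≠ u r) : Injective u := by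
  intro i j hij
  rcases eq_or_eq_or_eq hpq hpr hqr i with rfl | rfl | rfl <;>
    rcases eq_or_eq_or_eq hpq hpr hqr j with rfl | rfl | rfl <;>
    simp_all [eq_comm]

theorem exists_ne_ne (p q : Fin 3) : ∃ r, r ≠ p ∧ r ≠ q := by
  revert p q; decide

end Fin3

theorem exists_isLatinTransversal_of_three_cells {n : ℕ} {α : Type*} {f : Fin 3 → Fin n → α}
    {p q r : Fin 3} {a b c : Fin n} (hpq : p ≠ q) (hpr : p ≠ r) (hqr : q ≠ r)
    (hab : a ≠ b) (hac : a ≠ c) (hbc : b ≠ c)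
    (h₁ : f p a ≠ f q b) (h₂ : f p a ≠ f r c) (h₃ : f q b ≠ f r c) :
    ∃ σ, IsLatinTransversal f σ := by
  classical
  let σ : Fin 3 → Fin n := fun i => if i = p then a else if i = q then b else c
  have hσp : σ p = a := if_pos rfl
  have hσq : σ q = b := by simp [σ, hpq.symm]
  have hσr : σ r = c := by simp [σ, hpr.symm, hqr.symm]
  refine ⟨σ, Fin3.injective_of_ne hpq hpr hqr ?_ ?_ ?_, Fin3.injective_of_ne hpq hpr hqr ?_ ?_ ?_⟩ <;>
    simpa [hσp, hσq, hσr]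

theorem forall_eq_of_eq_of_ne {ι β : Type*} {g h : ι → β} {X Y : Set ι}
    (hgh : ∀ x ∈ X, ∀ y ∈ Y, x ≠ y → g x = h y) {x₀ : ι} (hx₀ : x₀ ∈ X)
    (hX : ∀ y ∈ Y, ∃ x ∈ X, x ≠ y) (hY : ∀ x ∈ X, ∃ y ∈ Y, y ≠ x₀ ∧ y ≠ x) :
    (∀ x ∈ X, g x = g x₀) ∧ ∀ y ∈ Y, h y = g x₀ := by
  have hg : ∀ x ∈ X, g x = g x₀ := by
    intro x hx
    obtain ⟨y, hy, hyx₀, hyx⟩ := hY x hx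
    rw [hgh x hx y hy hyx.symm, hgh x₀ hx₀ y hy hyx₀.symm]
  refine ⟨hg, fun y hy => ?_⟩
  obtain ⟨x, hx, hxy⟩ := hX y hy
  rw [← hgh x hx y hy hxy, hg x hx]

section NoTransversal

variable {n : ℕ} {α : Type*} {f : Fin 3 → Fin n → α} {s : α} {p q r : Fin 3} {a b c : Fin n}

theorem eq_of_pivot (hno : ¬ ∃ σ, IsLatinTransversal f σ) (hpq : p ≠ q) (hpr : p ≠ r)
    (hqr : q ≠ r) (ha : f p a = s) {x y : Fin n} (hxa : x ≠ a) (hya : y ≠ a) (hxy : x ≠ y)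
    (hx : f q x ≠ s) (hy : f r y ≠ s) : f q x = f r y := by
  by_contra hne
  exact hno (exists_isLatinTransversal_of_three_cells hpq hpr hqr hxa.symm hya.symm hxy
    (ha ▸ hx.symm) (ha ▸ hy.symm) hne)

/-- The condition `c = a ∨ c ≠ b` excludes two exceptional cells in one column `b ≠ a`: for
`n = 4` the two remaining columns would then split into two classes. -/
theorem exists_const_off_pivot (hn : 4 ≤ n) (hno : ¬ ∃ σ, IsLatinTransversal f σ) (hpq : p ≠ q)
    (hpr : p ≠ r) (hqr : q ≠ r) (ha : f p a = s) (hq : ∀ x, f q x = s → x = a ∨ x = b)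
    (hr : ∀ y, f r y = s → y = a ∨ y = c) (hbc : c = a ∨ c ≠ b) :
    ∃ v, (∀ x, x ≠ a → x ≠ b → f q x = v) ∧ ∀ y, y ≠ a → y ≠ c → f r y = v := by
  obtain ⟨x₀, hx₀a, hx₀b, hx₀c⟩ : ∃ x₀, x₀ ≠ a ∧ x₀ ≠ b ∧ (c = a ∨ x₀ = c) := by
    by_cases hca : c = a
    · obtain ⟨d, hda, hdb, -⟩ := Fin.exists_ne_of_four_le hn a b b
      exact ⟨d, hda, hdb, Or.inl hca⟩
    · exact ⟨c, hca, hbc.resolve_left hca, Or.inr rfl⟩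
  have key := forall_eq_of_eq_of_ne (g := f q) (h := f r) (X := {x | x ≠ a ∧ x ≠ b})
    (Y := {y | y ≠ a ∧ y ≠ c}) (x₀ := x₀) ?_ ⟨hx₀a, hx₀b⟩ ?_ ?_
  · exact ⟨f q x₀, fun x hxa hxb => key.1 x ⟨hxa, hxb⟩, fun y hya hyc => key.2 y ⟨hya, hyc⟩⟩
  · rintro x ⟨hxa, hxb⟩ y ⟨hya, hyc⟩ hxy
    refine eq_of_pivot hno hpq hpr hqr ha hxa hya hxy (fun hx => ?_) (fun hy => ?_)
    · rcases hq x hx with h | h <;> contradiction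
    · rcases hr y hy with h | h <;> contradiction
  · rintro y -
    obtain ⟨x, hxa, hxb, hxy⟩ := Fin.exists_ne_of_four_le hn a b y
    exact ⟨x, ⟨hxa, hxb⟩, hxy⟩
  · rintro x -
    obtain ⟨y, hya, hyx₀, hyx⟩ := Fin.exists_ne_of_four_le hn a x₀ x
    refine ⟨y, ⟨hya, ?_⟩, hyx₀, hyx⟩
    rcases hx₀c with h | h
    · exact h ▸ hya
    · exact h ▸ hyx₀

variable [DecidableEq α]

theorem exists_of_pivot_covers (hn : 4 ≤ n) (hno : ¬ ∃ σ, IsLatinTransversal f σ)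
    (ha : f p a = s) (hT : ∀ i x, f i x = s → i = p ∨ x = a) :
    ∃ v, 2 * n - 2 ≤ #(cellsOf f v) := by
  obtain ⟨q, hqp⟩ := exists_ne p
  obtain ⟨r, hrp, hrq⟩ := Fin3.exists_ne_ne p q
  have hcol : ∀ i, i ≠ p → ∀ x, f i x = s → x = a ∨ x = a :=
    fun i hi x hx => .inl ((hT i x hx).resolve_left hi)
  obtain ⟨v, hqv, hrv⟩ := exists_const_off_pivot hn hno hqp.symm hrp.symm hrq.symm ha
    (hcol q hqp) (hcol r hrp) (.inl rfl)
  refine ⟨v, ?_⟩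
  have hq := Fin.sub_one_le_card_filter_eq fun x hx => hqv x hx hx
  have hr := Fin.sub_one_le_card_filter_eq fun x hx => hrv x hx hx
  rw [card_cellsOf_eq_sum, Fin3.sum_eq hqp.symm hrp.symm hrq.symm]
  omega

theorem exists_of_pivots_in_two_rows (hn : 4 ≤ n) (hno : ¬ ∃ σ, IsLatinTransversal f σ)
    (hpq : p ≠ q) (hpr : p ≠ r) (hqr : q ≠ r) (hca : c ≠ a) (hcb : c ≠ b)
    (ha : f p a = s) (hb : f q b = s)
    (hT : ∀ i x, f i x = s → (i, x) = (p, a) ∨ (i, x) = (q, b) ∨ (i, x) = (r, c)) :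
    ∃ v, 2 * n - 2 ≤ #(cellsOf f v) := by
  have hrow : ∀ i x, f i x = s → (i = p → x = a) ∧ (i = q → x = b) ∧ (i = r → x = c) := by
    intro i x hx
    rcases hT i x hx with h | h | h <;> simp only [Prod.mk.injEq] at h <;> grind
  obtain ⟨v, hqv, hrv⟩ := exists_const_off_pivot hn hno hpq hpr hqr ha (b := b) (c := c)
    (fun x hx => .inr ((hrow q x hx).2.1 rfl)) (fun y hy => .inr ((hrow r y hy).2.2 rfl))
    (.inr hcb)
  obtain ⟨w, hpw, hrw⟩ := exists_const_off_pivot hn hno hpq.symm hqr hpr hb (b := a) (c := c)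
    (fun x hx => .inr ((hrow p x hx).1 rfl)) (fun y hy => .inr ((hrow r y hy).2.2 rfl))
    (.inr hca)
  obtain ⟨d, hda, hdb, hdc⟩ := Fin.exists_ne_of_four_le hn a b c
  obtain rfl : w = v := (hrw d hdb hdc).symm.trans (hrv d hda hdc)
  refine ⟨w, ?_⟩
  have hp := Fin.sub_two_le_card_filter_eq hpw
  have hq := Fin.sub_two_le_card_filter_eq hqv
  have hr := Fin.sub_two_le_card_filter_eq hrv
  rw [card_cellsOf_eq_sum, Fin3.sum_eq hpq hpr hqr]
  omega

theorem exists_of_two_pivots_in_row (hn : 4 ≤ n) (hno : ¬ ∃ σ, IsLatinTransversal f σ)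
    (hpq : p ≠ q) (hpr : p ≠ r) (hqr : q ≠ r) (hab : a ≠ b)
    (ha : f p a = s) (hb : f p b = s) (hT : ∀ i x, f i x = s → i = p ∨ (i, x) = (q, c)) :
    ∃ v, 2 * n - 2 ≤ #(cellsOf f v) := by
  have hq : ∀ x, f q x = s → x = c := fun x hx => by
    rcases hT q x hx with h | h
    · exact absurd h.symm hpq
    · exact (Prod.mk.inj h).2
  have hr : ∀ x, f r x ≠ s := fun x hx => by
    rcases hT r x hx with h | h
    · exact hpr h.symm
    · exact hqr (Prod.mk.inj h).1.symm
  obtain ⟨v, hqv, hrv⟩ := exists_const_off_pivot hn hno hpq hpr hqr ha (b := c) (c := a)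
    (fun x hx => .inr (hq x hx)) (fun y hy => absurd hy (hr y)) (.inl rfl)
  obtain ⟨w, hqw, hrw⟩ := exists_const_off_pivot hn hno hpq hpr hqr hb (b := c) (c := b)
    (fun x hx => .inr (hq x hx)) (fun y hy => absurd hy (hr y)) (.inl rfl)
  obtain ⟨d, hda, hdb, -⟩ := Fin.exists_ne_of_four_le hn a b b
  obtain rfl : w = v := (hrw d hdb hdb).symm.trans (hrv d hda hda)
  refine ⟨w, ?_⟩
  have hq' := Fin.sub_one_le_card_filter_eq (g := f q) (v := w) (a := c) fun x hxc => by
    by_cases hxa : x = a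
    · exact hqw x (hxa ▸ hab) hxc
    · exact hqv x hxa hxc
  have hr' := Fin.sub_one_le_card_filter_eq fun x hxa => hrv x hxa hxa
  rw [card_cellsOf_eq_sum, Fin3.sum_eq hpq hpr hqr]
  omega

theorem exists_of_independent_pivots (hn : 4 ≤ n) (hno : ¬ ∃ σ, IsLatinTransversal f σ)
    (hs : #(cellsOf f s) ≤ 3) (hpq : p ≠ q) (hab : a ≠ b) (ha : f p a = s) (hb : f q b = s) :
    ∃ v, 2 * n - 2 ≤ #(cellsOf f v) := by
  obtain ⟨r, hrp, hrq⟩ := Fin3.exists_ne_ne p q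
  -- A third occurrence of `s` in row `p` or `q` gives two pivots in one row; one in row `r`
  -- is paired with the pivot in its column, if there is one.
  by_cases hthird : ∃ i c, f i c = s ∧ (i, c) ≠ (p, a) ∧ (i, c) ≠ (q, b)
  · obtain ⟨i, c, hc, hcp, hcq⟩ := hthird
    have hT : ∀ j y, f j y = s → (j, y) = (p, a) ∨ (j, y) = (q, b) ∨ (j, y) = (i, c) :=
      fun j y hy => Finset.eq_or_eq_or_eq_of_card_le_three hs (mem_cellsOf.2 ha)
        (mem_cellsOf.2 hb) (mem_cellsOf.2 hc) (by simp [hpq]) hcp.symm hcq.symm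
        (mem_cellsOf.2 hy)
    rcases Fin3.eq_or_eq_or_eq hpq hrp.symm hrq.symm i with rfl | rfl | rfl
    · refine exists_of_two_pivots_in_row hn hno hpq hrp.symm hrq.symm (c := b)
        (fun h => hcp (by rw [h])) ha hc fun j y hy => ?_
      rcases hT j y hy with h | h | h <;> simp_all
    · refine exists_of_two_pivots_in_row hn hno hpq.symm hrq.symm hrp.symm (c := a)
        (fun h => hcq (by rw [h])) hb hc fun j y hy => ?_
      rcases hT j y hy with h | h | h <;> simp_all
    · by_cases hca : c = a
      · subst hca
        exact exists_of_pivots_in_two_rows hn hno hrp.symm hpq hrq hab.symm hab.symm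
          ha hc fun j y hy => by have := hT j y hy; tauto
      by_cases hcb : c = b
      · subst hcb
        exact exists_of_pivots_in_two_rows hn hno hrq.symm hpq.symm hrp hab hab
          hb hc fun j y hy => by have := hT j y hy; tauto
      exact exists_of_pivots_in_two_rows hn hno hpq hrp.symm hrq.symm hca hcb ha hb hT
  · push Not at hthird
    obtain ⟨c, hca, hcb, -⟩ := Fin.exists_ne_of_four_le hn a b b
    refine exists_of_pivots_in_two_rows hn hno hpq hrp.symm hrq.symm hca hcb (r := r) ha hb
      fun j y hy => ?_
    by_cases h : (j, y) = (p, a)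
    · exact .inl h
    · exact .inr (.inl (hthird j y hy h))

end NoTransversal

theorem stmt_7 (n : ℕ) (hn : 4 ≤ n) (f : Fin 3 → Fin n → ℕ)
    (hno : ¬ ∃ σ : Fin 3 → Fin n, Function.Injective σ ∧
        Function.Injective (fun i => f i (σ i)))
    (hs : ∃ s : ℕ,
        1 ≤ (Finset.univ.filter (fun p : Fin 3 × Fin n => f p.1 p.2 = s)).card ∧
        (Finset.univ.filter (fun p : Fin 3 × Fin n => f p.1 p.2 = s)).card ≤ 3) :
    ∃ s : ℕ, 2 * n - 2 ≤ (Finset.univ.filter (fun p : Fin 3 × Fin n => f p.1 p.2 = s)).card := by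
  obtain ⟨s, hs₁, hs₃⟩ := hs
  obtain ⟨⟨p, a⟩, hpa⟩ := card_pos.mp hs₁
  have ha : f p a = s := mem_cellsOf.mp hpa
  by_cases hind : ∃ q b, f q b = s ∧ q ≠ p ∧ b ≠ a
  · obtain ⟨q, b, hb, hqp, hba⟩ := hind
    exact exists_of_independent_pivots hn hno hs₃ hqp.symm hba.symm ha hb
  · push Not at hind
    exact exists_of_pivot_covers hn hno ha fun i x hx => or_iff_not_imp_left.mpr (hind i x hx)
end

section
/- Let n ≥ 5 be an integer. Then every 3-by-n array in which each symbol appears at most ⌊(3n - 1)/2⌋ times has a latin transversal. (Equivalently, L(3,n) ≥ ⌊(3n - 1)/2⌋ for n ≥ 5.) -/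
/-!
If two rows repeat different symbols `u ≠ v`, a cell of the third row outside `{u, v}` pins
the repeated symbols to one common pair of columns; chasing this through the three pairs of rows
shows that either every cell of the array lies in `{u, v}`, so that `u` or `v` occurs at least
`3n/2` times, or a transversal is visible. Otherwise, unless some row is injective, a single
symbol `m` is the only one repeated within any row, and the bound on the number of `m`'s leaves
enough other cells to complete a transversal through a cell carrying `m`. An injective row is
easy: choose cells with distinct symbols in the other two rows first, and at most two columns of
the injective row clash with them.
-/

open Finset Function

namespace LatinTransversal

variable {k n : ℕ}

def HasTransversal (f : Fin k → Fin n → ℕ) : Prop :=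
  ∃ σ : Fin k → Fin n, Injective σ ∧ Injective fun i => f i (σ i)

def rowCount (f : Fin k → Fin n → ℕ) (i : Fin k) (s : ℕ) : ℕ := #{a | f i a = s}

def symbolCount (f : Fin k → Fin n → ℕ) (s : ℕ) : ℕ := ∑ i, rowCount f i s

theorem card_filter_eq_symbolCount (f : Fin k → Fin n → ℕ) (s : ℕ) :
    #{p : Fin k × Fin n | f p.1 p.2 = s} = symbolCount f s := by
  simp only [symbolCount, rowCount, card_filter, Fintype.sum_prod_type]

theorem exists_ne_apply_eq_of_two_le_rowCount (f : Fin k → Fin n → ℕ) {i : Fin k} {s : ℕ}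
    (h : 2 ≤ rowCount f i s) (c : Fin n) : ∃ a ≠ c, f i a = s := by
  obtain ⟨a, ha, hac⟩ := exists_mem_ne h c
  exact ⟨a, hac, (mem_filter.1 ha).2⟩

theorem two_le_rowCount {f : Fin k → Fin n → ℕ} {i : Fin k} {a b : Fin n} (hab : a ≠ b)
    (h : f i a = f i b) : 2 ≤ rowCount f i (f i a) :=
  one_lt_card.2 ⟨a, by simp, b, by simp [h], hab⟩

theorem exists_two_le_rowCount {f : Fin k → Fin n → ℕ} {i : Fin k} (hi : ¬ Injective (f i)) :
    ∃ s, 2 ≤ rowCount f i s := by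
  obtain ⟨a, b, he, hab⟩ : ∃ a b, f i a = f i b ∧ a ≠ b := by
    simpa [Injective] using hi
  exact ⟨_, two_le_rowCount hab he⟩

theorem rowCount_le_two {f : Fin k → Fin n → ℕ} {i : Fin k} {s : ℕ} {x c : Fin n}
    (h : ∀ a, f i a = s → a = x ∨ a = c) : rowCount f i s ≤ 2 :=
  (card_le_card (t := {x, c}) fun a ha => by
    rcases h a (mem_filter.1 ha).2 with rfl | rfl <;> simp).trans card_le_two

theorem le_rowCount_add_rowCount {f : Fin k → Fin n → ℕ} {i : Fin k} {u v : ℕ}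
    {t : Finset (Fin n)} (h : ∀ c, f i c = u ∨ f i c = v ∨ c ∈ t) :
    n ≤ rowCount f i u + rowCount f i v + #t := by
  calc n = #(univ : Finset (Fin n)) := by simp
    _ ≤ #(univ.filter (f i · = u) ∪ univ.filter (f i · = v) ∪ t) :=
        card_le_card fun c _ => by rcases h c with h | h | h <;> simp [h]
    _ ≤ _ := (card_union_le _ _).trans (by gcongr; exact card_union_le _ _)

theorem exists_notMem_apply_ne {f : Fin k → Fin n → ℕ} {i : Fin k} {s : ℕ}
    {t : Finset (Fin n)} (h : rowCount f i s + #t < n) : ∃ a ∉ t, f i a ≠ s := by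
  have hcard : #t < #{a | f i a ≠ s} := by
    have := card_filter_add_card_filter_not (s := (univ : Finset (Fin n))) (fun a => f i a = s)
    simp only [card_univ, Fintype.card_fin, rowCount] at this h
    simp only [ne_eq]
    omega
  obtain ⟨a, ha, hat⟩ := exists_mem_notMem_of_card_lt_card hcard
  exact ⟨a, hat, (mem_filter.1 ha).2⟩

theorem exists_ne_ne_ne (hn : 4 ≤ n) (x y z : Fin n) : ∃ a, a ≠ x ∧ a ≠ y ∧ a ≠ z := by
  obtain ⟨a, -, ha⟩ := exists_mem_notMem_of_card_lt_card
    ((card_le_three (a := x) (b := y) (c := z)).trans_lt (by simp; omega) :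
      #{x, y, z} < #(univ : Finset (Fin n)))
  simp only [mem_insert, mem_singleton, not_or] at ha
  exact ⟨a, ha⟩

theorem fin_three_eq_or_eq_or_eq {i j l : Fin 3} (hij : i ≠ j) (hil : i ≠ l) (hjl : j ≠ l)
    (r : Fin 3) : r = i ∨ r = j ∨ r = l := by
  revert i j l r; decide

theorem exists_third_row {i j : Fin 3} (hij : i ≠ j) : ∃ l, i ≠ l ∧ j ≠ l := by
  revert i j; decide

theorem exists_other_rows (i : Fin 3) : ∃ j l, i ≠ j ∧ i ≠ l ∧ j ≠ l := by
  revert i; decide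

theorem injective_of_three {β : Type*} {g : Fin 3 → β} {i j l : Fin 3} (hij : i ≠ j)
    (hil : i ≠ l) (hjl : j ≠ l) (h₁ : g i ≠ g j) (h₂ : g i ≠ g l) (h₃ : g j ≠ g l) :
    Injective g := by
  intro r r' h
  rcases fin_three_eq_or_eq_or_eq hij hil hjl r with rfl | rfl | rfl <;>
    rcases fin_three_eq_or_eq_or_eq hij hil hjl r' with rfl | rfl | rfl <;> simp_all [eq_comm]

theorem symbolCount_eq_add (f : Fin 3 → Fin n → ℕ) {i j l : Fin 3} (hij : i ≠ j) (hil : i ≠ l)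
    (hjl : j ≠ l) (s : ℕ) :
    symbolCount f s = rowCount f i s + rowCount f j s + rowCount f l s := by
  have huniv : ({i, j, l} : Finset (Fin 3)) = univ := by revert i j l; decide
  rw [symbolCount, ← huniv, sum_insert (by simp [hij, hil]), sum_insert (by simp [hjl]),
    sum_singleton, add_assoc]

variable {f : Fin 3 → Fin n → ℕ}

theorem HasTransversal.of_ne {i j l : Fin 3} (hij : i ≠ j) (hil : i ≠ l) (hjl : j ≠ l)
    {a b c : Fin n} (hab : a ≠ b) (hac : a ≠ c) (hbc : b ≠ c) (h₁ : f i a ≠ f j b)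
    (h₂ : f i a ≠ f l c) (h₃ : f j b ≠ f l c) : HasTransversal f := by
  let σ : Fin 3 → Fin n := fun r => if r = i then a else if r = j then b else c
  have hσi : σ i = a := if_pos rfl
  have hσj : σ j = b := by simp [σ, hij.symm]
  have hσl : σ l = c := by simp [σ, hil.symm, hjl.symm]
  refine ⟨σ, injective_of_three hij hil hjl ?_ ?_ ?_, injective_of_three hij hil hjl ?_ ?_ ?_⟩ <;>
    simpa [hσi, hσj, hσl]

theorem exists_const_of_cross {α β : Type*} [DecidableEq α] {g h : α → β} {A B : Finset α}
    (hA : 3 ≤ #A) (hB : 2 ≤ #B) (hcross : ∀ a ∈ A, ∀ b ∈ B, a ≠ b → g a = h b) :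
    ∃ t, (∀ a ∈ A, g a = t) ∧ ∀ b ∈ B, h b = t := by
  obtain ⟨b₀, hb₀⟩ : B.Nonempty := card_pos.1 (by omega)
  have hB_const : ∀ b ∈ B, h b = h b₀ := fun b hb => by
    obtain ⟨a, ha, hab⟩ := exists_mem_notMem_of_card_lt_card (s := {b, b₀}) (t := A)
      (card_le_two.trans_lt (by omega))
    simp only [mem_insert, mem_singleton, not_or] at hab
    rw [← hcross a ha b hb hab.1, hcross a ha b₀ hb₀ hab.2]
  refine ⟨h b₀, fun a ha => ?_, hB_const⟩
  obtain ⟨b, hb, hba⟩ := exists_mem_ne hB a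
  rw [hcross a ha b hb hba.symm, hB_const b hb]

theorem exists_ne_apply_ne (hn : 3 ≤ n) (hcount : ∀ s, 2 * symbolCount f s < 3 * n)
    {i j l : Fin 3} (hij : i ≠ j) (hil : i ≠ l) (hjl : j ≠ l) :
    ∃ b c, b ≠ c ∧ f j b ≠ f l c := by
  by_contra! hcross
  obtain ⟨t, hj, hl⟩ := exists_const_of_cross (g := f j) (h := f l) (A := univ) (B := univ)
    (by simpa using hn) (by simp; omega) fun b _ c _ hbc => hcross b c hbc
  have hrow : ∀ r, (∀ a, f r a = t) → rowCount f r t = n := fun r hr => by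
    simp [rowCount, hr]
  have := symbolCount_eq_add f hij hil hjl t
  have := hrow j (fun a => hj a (mem_univ a))
  have := hrow l (fun a => hl a (mem_univ a))
  have := hcount t
  omega

theorem hasTransversal_of_injective_row (hn : 5 ≤ n) (hcount : ∀ s, 2 * symbolCount f s < 3 * n)
    {i : Fin 3} (hi : Injective (f i)) : HasTransversal f := by
  obtain ⟨j, l, hij, hil, hjl⟩ := exists_other_rows i
  obtain ⟨b, c, hbc, hne⟩ := exists_ne_apply_ne (by omega) hcount hij hil hjl
  have hclash : #(univ.filter fun a => f i a = f j b ∨ f i a = f l c) ≤ 2 :=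
    (card_le_card_of_injOn (f i) (t := {f j b, f l c}) (fun a ha => by simpa using ha)
      hi.injOn).trans card_le_two
  obtain ⟨a, -, ha⟩ := exists_mem_notMem_of_card_lt_card
    (s := {b, c} ∪ univ.filter fun a => f i a = f j b ∨ f i a = f l c) (t := univ)
    ((card_union_le _ _).trans_lt (by simp; have := card_le_two (a := b) (b := c); omega))
  simp only [mem_union, mem_insert, mem_singleton, mem_filter, mem_univ, true_and,
    not_or] at ha
  obtain ⟨⟨hab, hac⟩, hb, hc⟩ := ha
  exact .of_ne hij hil hjl hab hac hbc hb hc hne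

theorem exists_apply_ne_ne (hcount : ∀ s, 2 * symbolCount f s < 3 * n) {i j l : Fin 3}
    (hij : i ≠ j) (hil : i ≠ l) (hjl : j ≠ l) {u v : ℕ} (hi : ∀ c, f i c = u ∨ f i c = v)
    (hj : ∀ c, f j c = u ∨ f j c = v) : ∃ c, f l c ≠ u ∧ f l c ≠ v := by
  by_contra! hl
  have hpair : ∀ r, (∀ c, f r c = u ∨ f r c = v) → n ≤ rowCount f r u + rowCount f r v :=
    fun r hr => by simpa using le_rowCount_add_rowCount (t := ∅) fun c => (hr c).imp_right .inl
  have := hpair i hi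
  have := hpair j hj
  have := hpair l fun c => (em (f l c = u)).imp_right (hl c)
  have := symbolCount_eq_add f hij hil hjl u
  have := symbolCount_eq_add f hij hil hjl v
  have := hcount u
  have := hcount v
  omega

theorem apply_eq_iff_of_two_le_rowCount {i : Fin 3} {s : ℕ} {x c : Fin n}
    (h2 : 2 ≤ rowCount f i s) (hx : f i x = s) (h : ∀ a, f i a = s → a ≠ c → a = x) (a : Fin n) :
    f i a = s ↔ a = x ∨ a = c := by
  refine ⟨fun ha => (em (a = c)).elim .inr fun hac => .inl (h a ha hac), ?_⟩
  rintro (rfl | rfl)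
  · exact hx
  · obtain ⟨a', ha'x, ha'⟩ := exists_ne_apply_eq_of_two_le_rowCount f h2 x
    obtain rfl : a' = a := by_contra fun ha'c => ha'x (h a' ha' ha'c)
    exact ha'

theorem exists_pair_of_apply_ne_ne (hT : ¬ HasTransversal f) {i j l : Fin 3} (hij : i ≠ j)
    (hil : i ≠ l) (hjl : j ≠ l) {u v : ℕ} (huv : u ≠ v) (hu : 2 ≤ rowCount f i u)
    (hv : 2 ≤ rowCount f j v) {c : Fin n} (hcu : f l c ≠ u) (hcv : f l c ≠ v) :
    ∃ x, (∀ a, f i a = u ↔ a = x ∨ a = c) ∧ ∀ b, f j b = v ↔ b = x ∨ b = c := by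
  have hcol : ∀ a b, f i a = u → f j b = v → a ≠ c → b ≠ c → a = b := fun a b ha hb hac hbc =>
    by_contra fun hab => hT (.of_ne hij hil hjl hab hac hbc (by rwa [ha, hb]) (ha ▸ hcu.symm)
      (hb ▸ hcv.symm))
  obtain ⟨x, hxc, hx⟩ := exists_ne_apply_eq_of_two_le_rowCount f hu c
  obtain ⟨y, hyc, hy⟩ := exists_ne_apply_eq_of_two_le_rowCount f hv c
  obtain rfl := hcol x y hx hy hxc hyc
  exact ⟨x, apply_eq_iff_of_two_le_rowCount hu hx fun a ha hac => hcol a x ha hy hac hxc,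
    apply_eq_iff_of_two_le_rowCount hv hy fun b hb hbc => (hcol x b hx hb hxc hbc).symm⟩

theorem forall_apply_eq_or_eq (hT : ¬ HasTransversal f) {i j l : Fin 3} (hij : i ≠ j)
    (hil : i ≠ l) (hjl : j ≠ l) {u v : ℕ} (huv : u ≠ v) (hu : 2 ≤ rowCount f i u)
    (hv : 3 ≤ rowCount f j v) (c : Fin n) : f l c = u ∨ f l c = v := by
  by_contra! hc
  obtain ⟨x, -, hx⟩ := exists_pair_of_apply_ne_ne hT hij hil hjl huv hu (by omega) hc.1 hc.2
  have := rowCount_le_two fun b => (hx b).1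
  omega

theorem hasTransversal_of_forall_apply_eq_or_eq (hn : 5 ≤ n)
    (hcount : ∀ s, 2 * symbolCount f s < 3 * n) {i j l : Fin 3} (hij : i ≠ j) (hil : i ≠ l)
    (hjl : j ≠ l) {u v : ℕ} (huv : u ≠ v) (hu : 2 ≤ rowCount f i u)
    (hl : ∀ c, f l c = u ∨ f l c = v) (hlv : 3 ≤ rowCount f l v) : HasTransversal f := by
  by_contra hT
  have hj := forall_apply_eq_or_eq hT hil hij hjl.symm huv hu hlv
  have hjuv : n ≤ rowCount f j u + rowCount f j v := by
    simpa using le_rowCount_add_rowCount (t := ∅) fun c => (hj c).imp_right .inl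
  have hluv : n ≤ rowCount f l u + rowCount f l v := by
    simpa using le_rowCount_add_rowCount (t := ∅) fun c => (hl c).imp_right .inl
  have hi : ∀ c, f i c = u ∨ f i c = v := by
    by_cases hju : 2 ≤ rowCount f j u
    · exact forall_apply_eq_or_eq hT hjl hij.symm hil.symm huv hju hlv
    by_cases hlu : 2 ≤ rowCount f l u
    · exact forall_apply_eq_or_eq hT hjl.symm hil.symm hij.symm huv hlu (by omega)
    have := symbolCount_eq_add f hij hil hjl v
    have := hcount v
    omega
  obtain ⟨c, hcu, hcv⟩ := exists_apply_ne_ne hcount hij hil hjl hi hj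
  exact (hl c).elim hcu hcv

theorem hasTransversal_of_apply_eq_iff (hn : 5 ≤ n) {i j l : Fin 3} (hij : i ≠ j) (hil : i ≠ l)
    (hjl : j ≠ l) {u v : ℕ} (huv : u ≠ v) {x c : Fin n} (hxi : ∀ a, f i a = u ↔ a = x ∨ a = c)
    (hxj : ∀ b, f j b = v ↔ b = x ∨ b = c) (hv : 2 ≤ rowCount f j v) (hcu : f l c ≠ u)
    (hcv : f l c ≠ v) (hlu : 2 ≤ rowCount f l u) : HasTransversal f := by
  by_contra hT
  have hi : ∀ a, f i a = u ∨ f i a = v := fun a => by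
    by_contra! ha
    obtain ⟨y, -, hy⟩ := exists_pair_of_apply_ne_ne hT hjl.symm hil.symm hij.symm huv hlu hv
      ha.1 ha.2
    exact ha.1 ((hxi a).2 ((hxj a).1 ((hy a).2 (.inr rfl))))
  have hiv : 3 ≤ rowCount f i v := by
    have := le_rowCount_add_rowCount (t := ∅) fun c => (hi c).imp_right .inl
    have := rowCount_le_two fun a => (hxi a).1
    simp only [card_empty] at *
    omega
  have hj := forall_apply_eq_or_eq hT hil.symm hjl.symm hij huv hlu hiv
  obtain ⟨a, hax, hac, -⟩ := exists_ne_ne_ne (by omega) x c c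
  obtain ⟨b, hbx, hbc, hba⟩ := exists_ne_ne_ne (by omega) x c a
  have hfa : f i a = v := (hi a).resolve_left fun h => by simp_all
  have hfb : f j b = u := (hj b).resolve_right fun h => by simp_all
  exact hT (.of_ne hij hil hjl hba.symm hac hbc (by rw [hfa, hfb]; exact huv.symm)
    (hfa ▸ hcv.symm) (hfb ▸ hcu.symm))

theorem hasTransversal_of_two_plurals (hn : 5 ≤ n) (hcount : ∀ s, 2 * symbolCount f s < 3 * n)
    {i j : Fin 3} (hij : i ≠ j) {u v : ℕ} (huv : u ≠ v) (hu : 2 ≤ rowCount f i u)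
    (hv : 2 ≤ rowCount f j v) : HasTransversal f := by
  obtain ⟨l, hil, hjl⟩ := exists_third_row hij
  by_cases hl : ∀ c, f l c = u ∨ f l c = v
  · have := le_rowCount_add_rowCount (t := ∅) fun c => (hl c).imp_right .inl
    rcases (by simp only [card_empty] at this; omega :
        3 ≤ rowCount f l v ∨ 3 ≤ rowCount f l u) with h | h
    · exact hasTransversal_of_forall_apply_eq_or_eq hn hcount hij hil hjl huv hu hl h
    · exact hasTransversal_of_forall_apply_eq_or_eq hn hcount hij.symm hjl hil huv.symm hv
        (fun c => (hl c).symm) h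
  by_contra hT
  push Not at hl
  obtain ⟨c, hcu, hcv⟩ := hl
  obtain ⟨x, hxi, hxj⟩ := exists_pair_of_apply_ne_ne hT hij hil hjl huv hu hv hcu hcv
  have hl : n ≤ rowCount f l u + rowCount f l v + #{x, c} := le_rowCount_add_rowCount fun d => by
    by_contra! hd
    obtain ⟨y, hy, -⟩ := exists_pair_of_apply_ne_ne hT hij hil hjl huv hu hv hd.1 hd.2.1
    exact hd.2.2 (by simpa using (hxi d).1 ((hy d).2 (.inr rfl)))
  rcases (by have := card_le_two (a := x) (b := c); omega :
      2 ≤ rowCount f l u ∨ 2 ≤ rowCount f l v) with h | h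
  · exact hT (hasTransversal_of_apply_eq_iff hn hij hil hjl huv hxi hxj hv hcu hcv h)
  · exact hT (hasTransversal_of_apply_eq_iff hn hij.symm hjl hil huv.symm hxj hxi hu hcv hcu h)

theorem hasTransversal_of_apply_eq_of_apply_ne {p q r : Fin 3} (hqr : q ≠ r) (hqp : q ≠ p)
    (hrp : r ≠ p) {m : ℕ} (hrep : ∀ a a', a ≠ a' → f q a = f q a' → f q a = m) {b c : Fin n}
    (hc : f p c = m) (hb : f r b ≠ m) (hbc : b ≠ c)
    (hq : ∀ d, ∃ a, a ≠ b ∧ a ≠ c ∧ a ≠ d ∧ f q a ≠ m) : HasTransversal f := by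
  -- `m` being the only repeated symbol of row `q`, at most one of its columns carries `f r b`.
  obtain ⟨a, hab, hac, hfa⟩ : ∃ a, a ≠ b ∧ a ≠ c ∧ f q a ≠ f r b ∧ f q a ≠ m := by
    by_cases hd : ∃ d, f q d = f r b
    · obtain ⟨d, hd⟩ := hd
      obtain ⟨a, hab, hac, had, ha⟩ := hq d
      exact ⟨a, hab, hac, fun h => ha (hrep a d had (h.trans hd.symm)), ha⟩
    · obtain ⟨a, hab, hac, -, ha⟩ := hq b
      exact ⟨a, hab, hac, fun h => hd ⟨a, h⟩, ha⟩
  exact .of_ne hqr hqp hrp hab hac hbc hfa.1 (hc ▸ hfa.2) (hc ▸ hb)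

theorem hasTransversal_of_unique_plural_of_rowCount_le {i j l : Fin 3} (hij : i ≠ j)
    (hil : i ≠ l) (hjl : j ≠ l) {m : ℕ} (hrep : ∀ r a a', a ≠ a' → f r a = f r a' → f r a = m)
    (hi : rowCount f i m + 3 ≤ n) (hj : rowCount f j m + 2 ≤ n) (hmi : 2 ≤ rowCount f i m)
    (hml : 2 ≤ rowCount f l m) : HasTransversal f := by
  have hfree : ∀ x y, ∃ a, a ≠ x ∧ a ≠ y ∧ f i a ≠ m := fun x y => by
    obtain ⟨a, ha, hfa⟩ := exists_notMem_apply_ne (f := f) (i := i) (s := m) (t := {x, y})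
      (by have := card_le_two (a := x) (b := y); omega)
    simp only [mem_insert, mem_singleton, not_or] at ha
    exact ⟨a, ha.1, ha.2, hfa⟩
  by_cases hshared : ∃ c, f l c = m ∧ f i c = m
  · obtain ⟨c, hlc, hic⟩ := hshared
    obtain ⟨b, hbc, hjb⟩ := exists_notMem_apply_ne (f := f) (i := j) (s := m) (t := {c})
      (by simp; omega)
    refine hasTransversal_of_apply_eq_of_apply_ne hij hil hjl (hrep i) hlc hjb
      (by simpa using hbc) fun d => ?_
    obtain ⟨a, hab, had, ha⟩ := hfree b d
    exact ⟨a, hab, fun h => ha (h ▸ hic), had, ha⟩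
  by_cases hsub : ∃ b, f i b = m ∧ f j b ≠ m
  · obtain ⟨b, hib, hjb⟩ := hsub
    obtain ⟨c, hcb, hlc⟩ := exists_ne_apply_eq_of_two_le_rowCount f hml b
    refine hasTransversal_of_apply_eq_of_apply_ne hij hil hjl (hrep i) hlc hjb hcb.symm
      fun d => ?_
    obtain ⟨a, hac, had, ha⟩ := hfree c d
    exact ⟨a, fun h => ha (h ▸ hib), hac, had, ha⟩
  push Not at hshared hsub
  -- Now the `m`'s of row `i` are `m`'s of row `j` but not of row `l`.
  obtain ⟨c, -, hic⟩ := exists_ne_apply_eq_of_two_le_rowCount f hmi ⟨0, by omega⟩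
  obtain ⟨b, hbc, hib⟩ := exists_ne_apply_eq_of_two_le_rowCount f hmi c
  refine hasTransversal_of_apply_eq_of_apply_ne hjl hij.symm hil.symm (hrep j) hic
    (fun h => hshared b h hib) hbc fun d => ?_
  obtain ⟨a, had, ha⟩ := exists_notMem_apply_ne (f := f) (i := j) (s := m) (t := {d})
    (by simp; omega)
  exact ⟨a, fun h => ha (h ▸ hsub b hib), fun h => ha (h ▸ hsub c hic), by simpa using had, ha⟩

theorem hasTransversal_of_unique_plural (hn : 5 ≤ n) (hcount : ∀ s, 2 * symbolCount f s < 3 * n)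
    {m : ℕ} (hm : ∀ r, 2 ≤ rowCount f r m)
    (hrep : ∀ r a a', a ≠ a' → f r a = f r a' → f r a = m) : HasTransversal f := by
  obtain ⟨i, hi⟩ : ∃ i, rowCount f i m + 3 ≤ n := by
    by_contra! h
    have := hcount m
    simp only [symbolCount, Fin.sum_univ_three] at this
    have := h 0
    have := h 1
    have := h 2
    omega
  obtain ⟨j, l, hij, hil, hjl⟩ := exists_other_rows i
  have := symbolCount_eq_add f hij hil hjl m
  have := hcount m
  have := hm i
  by_cases hj : rowCount f j m + 2 ≤ n
  · exact hasTransversal_of_unique_plural_of_rowCount_le hij hil hjl hrep hi hj (hm i) (hm l)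
  · exact hasTransversal_of_unique_plural_of_rowCount_le hil hij hjl.symm hrep hi (by omega)
      (hm i) (hm j)

theorem exists_common_plural (hplural : ∀ r, ∃ s, 2 ≤ rowCount f r s)
    (hne : ∀ i j u v, i ≠ j → 2 ≤ rowCount f i u → 2 ≤ rowCount f j v → u = v) :
    ∃ m, (∀ r, 2 ≤ rowCount f r m) ∧ ∀ r a a', a ≠ a' → f r a = f r a' → f r a = m := by
  obtain ⟨m, hm⟩ := hplural 0
  have hall : ∀ r, 2 ≤ rowCount f r m := fun r => by
    obtain ⟨s, hs⟩ := hplural r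
    rcases eq_or_ne r 0 with rfl | hr
    · exact hm
    · rwa [hne r 0 s m hr hs hm] at hs
  refine ⟨m, hall, fun r a a' haa' he => ?_⟩
  obtain ⟨j, -, hrj, -, -⟩ := exists_other_rows r
  exact hne r j _ m hrj (two_le_rowCount haa' he) (hall j)

end LatinTransversal

open LatinTransversal

theorem stmt_9 (n : ℕ) (hn : 5 ≤ n) (f : Fin 3 → Fin n → ℕ)
    (h : ∀ s : ℕ, (Finset.univ.filter (fun p : Fin 3 × Fin n => f p.1 p.2 = s)).card ≤
        (3 * n - 1) / 2) :
    ∃ σ : Fin 3 → Fin n, Function.Injective σ ∧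
      Function.Injective (fun i => f i (σ i)) := by
  have hcount : ∀ s, 2 * symbolCount f s < 3 * n := fun s => by
    have := h s
    rw [card_filter_eq_symbolCount] at this
    omega
  show HasTransversal f
  by_cases hinj : ∃ i, Injective (f i)
  · obtain ⟨i, hi⟩ := hinj
    exact hasTransversal_of_injective_row hn hcount hi
  have hplural : ∀ r, ∃ s, 2 ≤ rowCount f r s := fun r =>
    exists_two_le_rowCount fun hr => hinj ⟨r, hr⟩
  by_cases htwo : ∃ i j u v, i ≠ j ∧ u ≠ v ∧ 2 ≤ rowCount f i u ∧ 2 ≤ rowCount f j v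
  · obtain ⟨i, j, u, v, hij, huv, hu, hv⟩ := htwo
    exact hasTransversal_of_two_plurals hn hcount hij huv hu hv
  obtain ⟨m, hm, hrep⟩ := exists_common_plural hplural fun i j u v hij hu hv =>
    by_contra fun huv => htwo ⟨i, j, u, v, hij, huv, hu, hv⟩
  exact hasTransversal_of_unique_plural hn hcount hm hrep
end

section
/- Let n ≥ 5 be an integer. Then there exists a 3-by-n array in which each symbol appears at most ⌊(3n - 1)/2⌋ + 1 times and which has no latin transversal. (Equivalently, L(3,n) ≤ ⌊(3n - 1)/2⌋ for n ≥ 5; combined with the lower bound this gives L(3,n) = ⌊(3n - 1)/2⌋.) -/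
/-!
Filling an `m × n` array row by row with the symbols `0, …, m - 2` in cyclic order uses each
symbol at most `⌈mn / (m - 1)⌉ = ⌊(mn - 1) / (m - 1)⌋ + 1` times, while a latin transversal would
need `m` distinct symbols.
-/

open Finset Function

/-- The entry in row `i`, column `j` is the row-major index `n * i + j`, reduced mod `k`. -/
def cyclicFilling (m n k : ℕ) (i : Fin m) (j : Fin n) : ℕ :=
  (finProdFinEquiv (i, j) : ℕ) % k

lemma card_filter_fin_mod_eq_le (N k s : ℕ) :
    #{x : Fin N | (x : ℕ) % k = s} ≤ (N - 1) / k + 1 := by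
  rw [← card_range ((N - 1) / k + 1)]
  refine card_le_card_of_injOn (fun x => (x : ℕ) / k) (fun x _ => ?_) (fun x hx y hy hxy => ?_)
  · simpa [Nat.lt_succ_iff] using Nat.div_le_div_right (by omega : (x : ℕ) ≤ N - 1)
  · simp only [coe_filter, mem_univ, true_and, Set.mem_ofPred_eq] at hx hy
    ext
    rw [← Nat.mod_add_div x k, ← Nat.mod_add_div y k, hx, hy]
    exact congrArg (s + k * ·) hxy

lemma card_filter_cyclicFilling_eq_le (m n k s : ℕ) :
    #{p : Fin m × Fin n | cyclicFilling m n k p.1 p.2 = s} ≤ (m * n - 1) / k + 1 := by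
  calc #{p : Fin m × Fin n | cyclicFilling m n k p.1 p.2 = s}
      = #{x : Fin (m * n) | (x : ℕ) % k = s} :=
        card_equiv finProdFinEquiv (by simp [cyclicFilling])
    _ ≤ (m * n - 1) / k + 1 := card_filter_fin_mod_eq_le _ _ _

lemma not_injective_of_forall_lt {ι κ : Type*} [Fintype ι] {f : ι → κ → ℕ} {k : ℕ}
    (hf : ∀ i j, f i j < k) (hk : k < Fintype.card ι) (σ : ι → κ) :
    ¬ Injective fun i => f i (σ i) := by
  intro hinj
  have : Injective fun i => (⟨f i (σ i), hf i (σ i)⟩ : Fin k) :=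
    fun i i' h => hinj (Fin.mk.inj_iff.mp h)
  have hcard := Fintype.card_le_of_injective _ this
  rw [Fintype.card_fin] at hcard
  omega

theorem exists_forall_card_le_and_not_exists_latin_transversal (m n : ℕ) (hm : 2 ≤ m) :
    ∃ f : Fin m → Fin n → ℕ,
      (∀ s : ℕ, #{p : Fin m × Fin n | f p.1 p.2 = s} ≤ (m * n - 1) / (m - 1) + 1) ∧
      ¬ ∃ σ : Fin m → Fin n, Injective σ ∧ Injective fun i => f i (σ i) := by
  refine ⟨cyclicFilling m n (m - 1), card_filter_cyclicFilling_eq_le m n (m - 1), ?_⟩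
  rintro ⟨σ, -, hσ⟩
  exact not_injective_of_forall_lt (fun i j => Nat.mod_lt _ (by omega)) (by rw [Fintype.card_fin]; omega) σ hσ

theorem stmt_10_general (n : ℕ) :
    ∃ f : Fin 3 → Fin n → ℕ,
      (∀ s : ℕ, (Finset.univ.filter (fun p : Fin 3 × Fin n => f p.1 p.2 = s)).card ≤
          (3 * n - 1) / 2 + 1) ∧
      ¬ ∃ σ : Fin 3 → Fin n, Function.Injective σ ∧
          Function.Injective (fun i => f i (σ i)) :=
  exists_forall_card_le_and_not_exists_latin_transversal 3 n (by norm_num)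

theorem stmt_10 (n : ℕ) (hn : 5 ≤ n) :
    ∃ f : Fin 3 → Fin n → ℕ,
      (∀ s : ℕ, (Finset.univ.filter (fun p : Fin 3 × Fin n => f p.1 p.2 = s)).card ≤
          (3 * n - 1) / 2 + 1) ∧
      ¬ ∃ σ : Fin 3 → Fin n, Function.Injective σ ∧
          Function.Injective (fun i => f i (σ i)) :=
  stmt_10_general n
end

section
/- Let m, n, k be positive integers with 2 ≤ m ≤ n and (m - 1)·k ≤ n - 1. Then every m-by-n array in which each symbol appears at most k times has a latin transversal. (Equivalently, L(m,n) ≥ ⌊(n - 1)/(m - 1)⌋.) -/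
/-!
Greedy, row by row. When rows `s` already carry a partial latin transversal `σ`, a new row `r`
can use any column except, for each `j ∈ s`, the column `σ j` and the columns where row `r`
repeats the symbol `f j (σ j)`. That symbol already occurs at `(j, σ j)`, so it occurs at most
`k - 1` times in row `r`, and each earlier row blocks at most `k` columns. With at most `m - 1`
rows done, at most `(m - 1) * k ≤ n - 1` columns are blocked.
-/

open Finset

section

variable {α β γ : Type*} [Fintype α] [DecidableEq α] [Fintype β] [DecidableEq β] [DecidableEq γ]
  {f : α → β → γ} {k : ℕ}

def IsPartialLatinTransversal (f : α → β → γ) (s : Finset α) (σ : α → β) : Prop :=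
  Set.InjOn σ s ∧ Set.InjOn (fun i => f i (σ i)) s

theorem card_filter_row_add_one_le (hf : ∀ x, #{p : α × β | f p.1 p.2 = x} ≤ k)
    {i r : α} (hir : i ≠ r) (b : β) : #{c | f r c = f i b} + 1 ≤ k := by
  set row : Finset (α × β) :=
    ({c | f r c = f i b} : Finset β).map ⟨(r, ·), Prod.mk_right_injective r⟩
  have hib : (i, b) ∉ row := by simp [row, hir.symm]
  calc #{c | f r c = f i b} + 1 = #(insert (i, b) row) := by
        rw [card_insert_of_notMem hib, card_map]
    _ ≤ #{p : α × β | f p.1 p.2 = f i b} := card_le_card <| by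
        rw [insert_subset_iff]
        exact ⟨by simp, fun p hp => by obtain ⟨c, hc, rfl⟩ := mem_map.1 hp; simpa using hc⟩
    _ ≤ k := hf _

def blockedColumns (f : α → β → γ) (s : Finset α) (σ : α → β) (r : α) : Finset β :=
  s.biUnion fun j => insert (σ j) ({c | f r c = f j (σ j)} : Finset β)

theorem card_blockedColumns_le (hf : ∀ x, #{p : α × β | f p.1 p.2 = x} ≤ k)
    {s : Finset α} {r : α} (hr : r ∉ s) (σ : α → β) : #(blockedColumns f s σ r) ≤ #s * k :=
  card_biUnion_le_card_mul _ _ _ fun _ hj =>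
    (card_insert_le _ _).trans (card_filter_row_add_one_le hf (ne_of_mem_of_not_mem hj hr) _)

theorem IsPartialLatinTransversal.exists_insert (hf : ∀ x, #{p : α × β | f p.1 p.2 = x} ≤ k)
    {s : Finset α} {σ : α → β} (hσ : IsPartialLatinTransversal f s σ) {r : α} (hr : r ∉ s)
    (hcard : #s * k < Fintype.card β) :
    ∃ τ, IsPartialLatinTransversal f (insert r s) τ := by
  obtain ⟨c, -, hc⟩ := exists_mem_notMem_of_card_lt_card (s := blockedColumns f s σ r) (t := univ)
    (by rw [card_univ]; exact (card_blockedColumns_le hf hr σ).trans_lt hcard)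
  simp only [blockedColumns, mem_biUnion, mem_insert, mem_filter_univ,
    not_exists, not_and, not_or] at hc
  have hupd : ∀ j ∈ s, Function.update σ r c j = σ j := fun j hj =>
    Function.update_of_ne (ne_of_mem_of_not_mem hj hr) _ _
  refine ⟨Function.update σ r c, ?_, ?_⟩
  · rw [coe_insert, Set.injOn_insert (by simpa using hr)]
    refine ⟨hσ.1.congr fun j hj => (hupd j hj).symm, ?_⟩
    rintro ⟨j, hj, hjc⟩
    simp only [Function.update_self, hupd j hj] at hjc
    exact (hc j hj).1 hjc.symm
  · rw [coe_insert, Set.injOn_insert (by simpa using hr)]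
    refine ⟨hσ.2.congr fun j hj => by simp only [hupd j hj], ?_⟩
    rintro ⟨j, hj, hjc⟩
    simp only [Function.update_self, hupd j hj] at hjc
    exact (hc j hj).2 hjc.symm

theorem exists_isPartialLatinTransversal [Nonempty (α → β)]
    (hf : ∀ x, #{p : α × β | f p.1 p.2 = x} ≤ k) (s : Finset α)
    (hs : ∀ t ⊂ s, #t * k < Fintype.card β) :
    ∃ σ, IsPartialLatinTransversal f s σ := by
  induction s using Finset.induction_on with
  | empty => exact ⟨Classical.arbitrary _, by simp [IsPartialLatinTransversal]⟩
  | insert r s hr ih =>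
    have hsub : s ⊂ insert r s := ssubset_insert hr
    obtain ⟨σ, hσ⟩ := ih fun t ht => hs t (ht.trans hsub)
    exact hσ.exists_insert hf hr (hs s hsub)

end

theorem stmt_12_general (m n k : ℕ) (hmn : m ≤ n)
    (hbound : (m - 1) * k ≤ n - 1) (f : Fin m → Fin n → ℕ)
    (h : ∀ s : ℕ, (Finset.univ.filter (fun p : Fin m × Fin n => f p.1 p.2 = s)).card ≤ k) :
    ∃ σ : Fin m → Fin n, Function.Injective σ ∧
      Function.Injective (fun i => f i (σ i)) := by
  have hs : ∀ t ⊂ (univ : Finset (Fin m)), #t * k < Fintype.card (Fin n) := fun t ht => by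
    have := card_lt_card ht
    simp only [card_univ, Fintype.card_fin] at this ⊢
    calc #t * k ≤ (m - 1) * k := Nat.mul_le_mul_right k (by omega)
      _ < n := by omega
  have : Nonempty (Fin m → Fin n) := ⟨Fin.castLE hmn⟩
  obtain ⟨σ, hσ, hfσ⟩ := exists_isPartialLatinTransversal h univ hs
  rw [coe_univ, Set.injOn_univ] at hσ hfσ
  exact ⟨σ, hσ, hfσ⟩

theorem stmt_12 (m n k : ℕ) (hk : 0 < k) (hm : 2 ≤ m) (hmn : m ≤ n)
    (hbound : (m - 1) * k ≤ n - 1) (f : Fin m → Fin n → ℕ)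
    (h : ∀ s : ℕ, (Finset.univ.filter (fun p : Fin m × Fin n => f p.1 p.2 = s)).card ≤ k) :
    ∃ σ : Fin m → Fin n, Function.Injective σ ∧
      Function.Injective (fun i => f i (σ i)) :=
  stmt_12_general m n k hmn hbound f h
end
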